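/- For w ∈ E₉ and t ∈ ℤ with ⟨w,w⟩ = 2t, the isometry ι_w defined by ι_w(v) = v + ⟨v,k₉⟩·w − (⟨w,v⟩ + t·⟨v,k₉⟩)·k₉ is the identity map of ℤ^{1,9} if and only if w is an integer multiple of k₉. Consequently ι induces an injective map from the quotient group E₉/ℤk₉ into the group of isometries of ℤ^{1,9}. -/

import Mathlib

/-! Evaluating `ι_w` at a vector `u` with `⟨u, k₉⟩ = 1` recovers `w` modulo `ℤk₉`, so `ι_w`
determines the class of `w` in `E₉/ℤk₉`. Conversely `ι_{ck₉}` is the identity because `k₉` is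
isotropic, which also forces `t = 0`. -/

def B {n : ℕ} (x y : Fin (n + 1) → ℤ) : ℤ :=
  x 0 * y 0 - ∑ i : Fin n, x i.succ * y i.succ

def kv (n : ℕ) : Fin (n + 1) → ℤ := fun j => if j = 0 then -3 else 1

def iota (w : Fin 10 → ℤ) (t : ℤ) (v : Fin 10 → ℤ) : Fin 10 → ℤ :=
  v + B v (kv 9) • w - (B w v + t * B v (kv 9)) • kv 9

section BilinearForm

variable {n : ℕ}

lemma B_comm (x y : Fin (n + 1) → ℤ) : B x y = B y x := by
  simp only [B, mul_comm]

lemma B_smul_left (a : ℤ) (x y : Fin (n + 1) → ℤ) : B (a • x) y = a * B x y := by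
  simp [B, Finset.mul_sum, mul_sub, mul_assoc]

lemma B_smul_right (a : ℤ) (x y : Fin (n + 1) → ℤ) : B x (a • y) = a * B x y := by
  rw [B_comm, B_smul_left, B_comm]

end BilinearForm

lemma B_kv_self : B (kv 9) (kv 9) = 0 := by decide

lemma exists_B_kv_eq_one : ∃ u : Fin 10 → ℤ, B u (kv 9) = 1 :=
  ⟨Pi.single 1 (-1), by decide⟩

lemma iota_apply_of_B_kv_eq_one {u : Fin 10 → ℤ} (hu : B u (kv 9) = 1) (w : Fin 10 → ℤ)
    (t : ℤ) : iota w t u = u + w - (B w u + t) • kv 9 := by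
  rw [iota, hu, one_smul, mul_one]

lemma iota_zero_zero (v : Fin 10 → ℤ) : iota 0 0 v = v := by
  simp [iota, B]

lemma iota_smul_kv (c : ℤ) (v : Fin 10 → ℤ) : iota (c • kv 9) 0 v = v := by
  rw [iota, B_smul_left, B_comm (kv 9) v, zero_mul, add_zero, smul_comm, mul_smul]
  abel

lemma eq_zero_of_B_smul_kv_self {c t : ℤ} (ht : B (c • kv 9) (c • kv 9) = 2 * t) : t = 0 := by
  rw [B_smul_left, B_smul_right, B_kv_self] at ht
  omega

lemma exists_sub_eq_smul_kv_of_iota_eq {w w' : Fin 10 → ℤ} {t t' : ℤ}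
    (h : ∀ v, iota w t v = iota w' t' v) : ∃ c : ℤ, w - w' = c • kv 9 := by
  obtain ⟨u, hu⟩ := exists_B_kv_eq_one
  refine ⟨(B w u + t) - (B w' u + t'), ?_⟩
  have hu_eq := h u
  rw [iota_apply_of_B_kv_eq_one hu, iota_apply_of_B_kv_eq_one hu] at hu_eq
  linear_combination (norm := module) hu_eq

/-- `ι_w` is the identity iff `w ∈ ℤk₉`; consequently `ι` is injective
on `E₉/ℤk₉`. -/
theorem iota_eq_id_iff_multiple_of_k :
    (∀ w : Fin 10 → ℤ, B w (kv 9) = 0 → ∀ t : ℤ, B w w = 2 * t →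
      ((∀ v : Fin 10 → ℤ, iota w t v = v) ↔ ∃ c : ℤ, w = c • kv 9)) ∧
    (∀ w w' : Fin 10 → ℤ, B w (kv 9) = 0 → B w' (kv 9) = 0 →
      ∀ t t' : ℤ, B w w = 2 * t → B w' w' = 2 * t' →
      (∀ v : Fin 10 → ℤ, iota w t v = iota w' t' v) →
      ∃ c : ℤ, w - w' = c • kv 9) := by
  refine ⟨fun w _ t ht => ⟨fun h => ?_, ?_⟩,
    fun w w' _ _ t t' _ _ h => exists_sub_eq_smul_kv_of_iota_eq h⟩
  · simpa using exists_sub_eq_smul_kv_of_iota_eq (w' := 0) (t' := 0)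
      fun v => (h v).trans (iota_zero_zero v).symm
  · rintro ⟨c, rfl⟩
    rw [eq_zero_of_B_smul_kv_self ht]
    exact iota_smul_kv c
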